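/- arXiv:2510.17029 — 2 statements merged into one kernel-verified Lean document; each statement's English description precedes it below -/
import Mathlib

section
/- Let f be a polynomial in ℂ[x,y,z]. Then f satisfies f(−(1/2)x − (√3/2)y, (√3/2)x − (1/2)y, z) = f(x,y,z) and f(x,−y,z) = f(x,y,z) (i.e. f is invariant under the dihedral group of order 6 generated by the rotation of the (x,y)-variables by 2π/3 and the reflection y ↦ −y, with z fixed) if and only if f lies in the ℂ-subalgebra of ℂ[x,y,z] generated by the three polynomials z, x²+y², and x³−3xy². -/
open MvPolynomial

/-- The ℂ-algebra endomorphism of ℂ[x,y,z] given by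
`x ↦ -(1/2)x - (√3/2)y`, `y ↦ (√3/2)x - (1/2)y`, `z ↦ z`
(rotation of the (x,y)-variables by 2π/3). -/
noncomputable def rotSub : MvPolynomial (Fin 3) ℂ →ₐ[ℂ] MvPolynomial (Fin 3) ℂ :=
  aeval ![C (-(1/2) : ℂ) * X 0 - C ((Real.sqrt 3 / 2 : ℝ) : ℂ) * X 1,
          C ((Real.sqrt 3 / 2 : ℝ) : ℂ) * X 0 - C ((1/2) : ℂ) * X 1,
          X 2]

/-- The ℂ-algebra endomorphism of ℂ[x,y,z] given by
`x ↦ x`, `y ↦ -y`, `z ↦ z` (reflection across the x-axis). -/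
noncomputable def reflSub : MvPolynomial (Fin 3) ℂ →ₐ[ℂ] MvPolynomial (Fin 3) ℂ :=
  aeval ![X 0, -X 1, X 2]

namespace DihedralInv

noncomputable abbrev R3 := MvPolynomial (Fin 3) ℂ

noncomputable def ww : ℂ := -(1/2) + (Real.sqrt 3 / 2 : ℝ) * Complex.I

lemma sq3 : ((Real.sqrt 3 : ℝ) : ℂ)^2 = 3 := by
  norm_cast; rw [Real.sq_sqrt]; norm_num

lemma ww_pow_three : ww ^ 3 = 1 := by
  unfold ww
  push_cast
  have e : ((Real.sqrt 3 : ℝ) : ℂ)^2 * Complex.I^2 = -3 := by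
    rw [sq3, Complex.I_sq]; ring
  push_cast at e
  linear_combination (-(3:ℂ)/8 + ((Real.sqrt 3:ℝ):ℂ) * Complex.I/8) * e

lemma ww_ne_one : ww ≠ 1 := by
  unfold ww
  intro h
  have := congrArg Complex.im h
  simp [Complex.add_im] at this

lemma ww_sq_ne_one : ww ^ 2 ≠ 1 := by
  unfold ww
  intro h
  have := congrArg Complex.im h
  have hI : Complex.I.im = 1 := Complex.I_im
  simp [pow_two, Complex.add_im, Complex.add_re, Complex.mul_im, Complex.mul_re] at this
  have h3 : Real.sqrt 3 > 0 := Real.sqrt_pos.mpr (by norm_num)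
  nlinarith [this]

lemma ww_pow_eq_one {n : ℕ} (h : ww ^ n = 1) : 3 ∣ n := by
  have hm : ww ^ (n % 3) = 1 := by
    conv at h => rw [← Nat.div_add_mod n 3]
    rw [pow_add, pow_mul, ww_pow_three, one_pow, one_mul] at h
    exact h
  have : n % 3 = 0 ∨ n % 3 = 1 ∨ n % 3 = 2 := by omega
  rcases this with h0 | h1 | h2
  · omega
  · rw [h1, pow_one] at hm; exact absurd hm ww_ne_one
  · rw [h2] at hm; exact absurd hm ww_sq_ne_one

noncomputable def rot' : R3 →ₐ[ℂ] R3 :=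
  aeval ![C ww * X 0, C (ww^2) * X 1, X 2]

noncomputable def refl' : R3 →ₐ[ℂ] R3 :=
  aeval ![X 1, X 0, X 2]

noncomputable def EE : R3 →ₐ[ℂ] R3 :=
  aeval ![X 0 + C Complex.I * X 1, X 0 - C Complex.I * X 1, X 2]

noncomputable def EE' : R3 →ₐ[ℂ] R3 :=
  aeval ![C (1/2 : ℂ) * (X 0 + X 1), C (-(Complex.I/2)) * (X 0 - X 1), X 2]

lemma EE'_comp_EE : EE'.comp EE = AlgHom.id ℂ R3 := by
  apply MvPolynomial.algHom_ext
  intro i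
  have hI : Complex.I ^ 2 = -1 := Complex.I_sq
  fin_cases i
  · simp [EE, EE']
    apply MvPolynomial.funext; intro p
    simp
    linear_combination (-(p 0 - p 1)/2) * hI
  · simp [EE, EE']
    apply MvPolynomial.funext; intro p
    simp
    linear_combination ((p 0 - p 1)/2) * hI
  · simp [EE, EE']

lemma EE_comp_EE' : EE.comp EE' = AlgHom.id ℂ R3 := by
  apply MvPolynomial.algHom_ext
  intro i
  have hI : Complex.I ^ 2 = -1 := Complex.I_sq
  fin_cases i
  · simp [EE, EE']
    apply MvPolynomial.funext; intro p
    simp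
    ring
  · simp [EE, EE']
    apply MvPolynomial.funext; intro p
    simp
    linear_combination (-(p 1)) * hI
  · simp [EE, EE']

lemma EE'_EE (p : R3) : EE' (EE p) = p := AlgHom.congr_fun EE'_comp_EE p
lemma EE_EE' (p : R3) : EE (EE' p) = p := AlgHom.congr_fun EE_comp_EE' p

lemma rot_conj : rotSub.comp EE = EE.comp rot' := by
  apply MvPolynomial.algHom_ext
  intro i
  have hI : Complex.I ^ 2 = -1 := Complex.I_sq
  have h := sq3
  push_cast at h
  fin_cases i
  · simp [EE, rot', rotSub, ww]
    apply MvPolynomial.funext; intro p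
    simp
    linear_combination (-(((Real.sqrt 3:ℝ):ℂ))/2 * p 1) * hI
  · simp [EE, rot', rotSub, ww]
    apply MvPolynomial.funext; intro p
    simp
    linear_combination
      (-(((Real.sqrt 3:ℝ):ℂ))*(p 1)/2 - 3*(p 0 - Complex.I*(p 1))/4
        - ((((Real.sqrt 3:ℝ):ℂ))^2 - 3)*(p 0 - Complex.I*(p 1))/4) * hI
      + ((p 0 - Complex.I*(p 1))/4) * h
  · simp [EE, rot', rotSub]

lemma refl_conj : reflSub.comp EE = EE.comp refl' := by
  apply MvPolynomial.algHom_ext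
  intro i
  fin_cases i <;> simp [EE, refl', reflSub, sub_eq_add_neg]

/-! ### the invariant algebra in the u,v coordinates -/

noncomputable def A' : Subalgebra ℂ R3 :=
  Algebra.adjoin ℂ ({X 2, X 0 * X 1, X 0 ^ 3 + X 1 ^ 3} : Set R3)

lemma X2_mem : (X 2 : R3) ∈ A' :=
  Algebra.subset_adjoin (by simp)

lemma X01_mem : (X 0 * X 1 : R3) ∈ A' :=
  Algebra.subset_adjoin (by simp)

lemma cube_mem : (X 0 ^ 3 + X 1 ^ 3 : R3) ∈ A' :=
  Algebra.subset_adjoin (by simp)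

lemma powsum_mem : ∀ k : ℕ, (X 0 : R3) ^ (3 * k) + X 1 ^ (3 * k) ∈ A' := by
  have H : ∀ k : ℕ, ((X 0 : R3) ^ (3 * k) + X 1 ^ (3 * k) ∈ A') ∧
      ((X 0 : R3) ^ (3 * (k+1)) + X 1 ^ (3 * (k+1)) ∈ A') := by
    intro k
    induction k with
    | zero =>
      constructor
      · have : (X 0 : R3) ^ (3 * 0) + X 1 ^ (3 * 0) = algebraMap ℂ R3 2 := by
          simp [algebraMap_eq]
          rw [← C_1, ← C_add]
          norm_num
        rw [this]
        exact A'.algebraMap_mem 2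
      · simpa using cube_mem
    | succ k ih =>
      refine ⟨ih.2, ?_⟩
      have key : (X 0 : R3) ^ (3 * (k+2)) + X 1 ^ (3 * (k+2)) =
          (X 0 ^ 3 + X 1 ^ 3) * (X 0 ^ (3 * (k+1)) + X 1 ^ (3 * (k+1)))
            - (X 0 * X 1) ^ 3 * (X 0 ^ (3 * k) + X 1 ^ (3 * k)) := by
        ring
      rw [show 3 * (k + 1 + 1) = 3 * (k + 2) by ring, key]
      exact A'.sub_mem (A'.mul_mem cube_mem ih.2)
        (A'.mul_mem (A'.pow_mem X01_mem 3) ih.1)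
  exact fun k => (H k).1

lemma pair_mem_le {a b c : ℕ} (hab : a ≤ b) (h3 : a % 3 = b % 3) :
    (X 0 : R3) ^ a * X 1 ^ b * X 2 ^ c + X 0 ^ b * X 1 ^ a * X 2 ^ c ∈ A' := by
  obtain ⟨k, rfl⟩ : ∃ k, b = a + 3 * k := ⟨(b - a) / 3, by omega⟩
  have key : (X 0 : R3) ^ a * X 1 ^ (a + 3*k) * X 2 ^ c + X 0 ^ (a + 3*k) * X 1 ^ a * X 2 ^ c =
      (X 0 * X 1) ^ a * X 2 ^ c * (X 0 ^ (3*k) + X 1 ^ (3*k)) := by ring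
  rw [key]
  exact A'.mul_mem (A'.mul_mem (A'.pow_mem X01_mem a) (A'.pow_mem X2_mem c)) (powsum_mem k)

lemma pair_mem {a b c : ℕ} (h3 : a % 3 = b % 3) :
    (X 0 : R3) ^ a * X 1 ^ b * X 2 ^ c + X 0 ^ b * X 1 ^ a * X 2 ^ c ∈ A' := by
  rcases le_total a b with h | h
  · exact pair_mem_le h h3
  · rw [add_comm]
    exact pair_mem_le h h3.symm

/-! ### monomial computations -/

lemma mono_eq (m : Fin 3 →₀ ℕ) (c : ℂ) :
    (monomial m c : R3) = C c * (X 0 ^ m 0 * X 1 ^ m 1 * X 2 ^ m 2) := by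
  rw [monomial_eq]
  congr 1
  rw [Finsupp.prod_fintype _ _ (fun i => pow_zero _), Fin.prod_univ_three]

lemma rot'_monomial (m : Fin 3 →₀ ℕ) (c : ℂ) :
    rot' (monomial m c) = monomial m (ww ^ (m 0 + 2 * m 1) * c) := by
  rw [rot', aeval_monomial, mono_eq,
    Finsupp.prod_fintype _ _ (fun i => pow_zero _), Fin.prod_univ_three]
  simp only [Matrix.cons_val_zero, Matrix.cons_val_one, Matrix.head_cons,
    Matrix.cons_val_two, Matrix.tail_cons, algebraMap_eq]
  rw [mul_pow, mul_pow, ← C_pow, ← C_pow, ← pow_mul, pow_add]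
  rw [C_mul, C_mul]
  ring

lemma refl'_monomial (m : Fin 3 →₀ ℕ) (c : ℂ) :
    refl' (monomial m c) = C c * (X 0 ^ m 1 * X 1 ^ m 0 * X 2 ^ m 2) := by
  rw [refl', aeval_monomial,
    Finsupp.prod_fintype _ _ (fun i => pow_zero _), Fin.prod_univ_three]
  simp only [Matrix.cons_val_zero, Matrix.cons_val_one, Matrix.head_cons,
    Matrix.cons_val_two, Matrix.tail_cons, algebraMap_eq]
  ring

lemma support_cond {g : R3} (hg : rot' g = g) {m : Fin 3 →₀ ℕ} (hm : m ∈ g.support) :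
    m 0 % 3 = m 1 % 3 := by
  have h1 : coeff m (rot' g) = ww ^ (m 0 + 2 * m 1) * coeff m g := by
    conv_lhs => rw [g.as_sum]
    rw [map_sum, Finset.sum_congr rfl (fun v _ => rot'_monomial v (coeff v g)), coeff_sum]
    simp only [coeff_monomial]
    rw [Finset.sum_ite_eq' g.support m (fun v => ww ^ (v 0 + 2 * v 1) * coeff v g), if_pos hm]
  rw [hg] at h1
  have hc : coeff m g ≠ 0 := mem_support_iff.mp hm
  have h2 : ww ^ (m 0 + 2 * m 1) * coeff m g = 1 * coeff m g := by
    rw [one_mul]; exact h1.symm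
  have h3 := ww_pow_eq_one (mul_right_cancel₀ hc h2)
  omega

lemma key_mem {g : R3} (h1 : rot' g = g) (h2 : refl' g = g) : g ∈ A' := by
  have hrepr : g = C (2⁻¹ : ℂ) *
      ∑ m ∈ g.support, (monomial m (coeff m g) + refl' (monomial m (coeff m g))) := by
    rw [Finset.sum_add_distrib, ← map_sum, ← g.as_sum, h2, ← two_mul, ← mul_assoc]
    have : (C (2⁻¹ : ℂ) : R3) * 2 = 1 := by
      rw [← map_ofNat (C : ℂ →+* R3) 2, ← C_mul, inv_mul_cancel₀ (two_ne_zero), C_1]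
    rw [this, one_mul]
  rw [hrepr]
  refine A'.mul_mem (by rw [← algebraMap_eq]; exact A'.algebraMap_mem _) (Subalgebra.sum_mem A' ?_)
  intro m hm
  rw [refl'_monomial, mono_eq, ← mul_add]
  refine A'.mul_mem (by rw [← algebraMap_eq]; exact A'.algebraMap_mem _) ?_
  have hcond := support_cond h1 hm
  exact pair_mem (c := m 2) hcond


/-! ### easy direction: generators are fixed -/

lemma rot_fix_X2 : rotSub (X 2 : R3) = X 2 := by simp [rotSub]

lemma refl_fix_X2 : reflSub (X 2 : R3) = X 2 := by simp [reflSub]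

lemma rot_fix_g2 : rotSub ((X 0 : R3) ^ 2 + X 1 ^ 2) = X 0 ^ 2 + X 1 ^ 2 := by
  have h := sq3
  apply MvPolynomial.funext; intro p
  simp [rotSub]
  linear_combination ((p 0)^2/4 + (p 1)^2/4) * h

lemma refl_fix_g2 : reflSub ((X 0 : R3) ^ 2 + X 1 ^ 2) = X 0 ^ 2 + X 1 ^ 2 := by
  simp [reflSub]

lemma rot_fix_g3 : rotSub ((X 0 : R3) ^ 3 - 3 * X 0 * X 1 ^ 2) = X 0 ^ 3 - 3 * X 0 * X 1 ^ 2 := by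
  have h := sq3
  apply MvPolynomial.funext; intro p
  simp [rotSub, map_ofNat]
  linear_combination (-(p 0)*(p 1)^2
    - (p 0 + ((Real.sqrt 3:ℝ):ℂ) * p 1)*((p 1)^2 - 3*(p 0)^2)/8) * h

lemma refl_fix_g3 : reflSub ((X 0 : R3) ^ 3 - 3 * X 0 * X 1 ^ 2) = X 0 ^ 3 - 3 * X 0 * X 1 ^ 2 := by
  apply MvPolynomial.funext; intro p
  simp [reflSub, map_ofNat]

/-! ### images of the generators of A' under EE -/

lemma EE_X2 : EE (X 2 : R3) = X 2 := by simp [EE]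

lemma EE_g2 : EE ((X 0 : R3) * X 1) = X 0 ^ 2 + X 1 ^ 2 := by
  have hI : Complex.I ^ 2 = -1 := Complex.I_sq
  apply MvPolynomial.funext; intro p
  simp [EE]
  linear_combination (-(p 1)^2) * hI

lemma EE_g3 : EE ((X 0 : R3) ^ 3 + X 1 ^ 3) = C 2 * (X 0 ^ 3 - 3 * X 0 * X 1 ^ 2) := by
  have hI : Complex.I ^ 2 = -1 := Complex.I_sq
  apply MvPolynomial.funext; intro p
  simp [EE]
  linear_combination (6 * p 0 * (p 1)^2) * hI

end DihedralInv

open DihedralInv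

/-- A polynomial `f ∈ ℂ[x,y,z]` is invariant under the dihedral group of order 6
(generated by the rotation of the (x,y)-variables by 2π/3 and the reflection
`y ↦ -y`, with `z` fixed) if and only if it lies in the ℂ-subalgebra generated by
`z`, `x² + y²` and `x³ - 3xy²`. -/
theorem invariant_iff_mem_adjoin (f : MvPolynomial (Fin 3) ℂ) :
    (rotSub f = f ∧ reflSub f = f) ↔
      f ∈ Algebra.adjoin ℂ
        ({X 2, X 0 ^ 2 + X 1 ^ 2, X 0 ^ 3 - 3 * X 0 * X 1 ^ 2} :
          Set (MvPolynomial (Fin 3) ℂ)) := by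
  constructor
  · rintro ⟨h1, h2⟩
    set g := EE' f with hg
    have hf : EE g = f := EE_EE' f
    have hinj : ∀ p q : R3, EE p = EE q → p = q := by
      intro p q h
      have := congrArg EE' h
      rwa [EE'_EE, EE'_EE] at this
    have hgrot : rot' g = g := by
      apply hinj
      have hc := AlgHom.congr_fun rot_conj g
      simp only [AlgHom.comp_apply] at hc
      rw [← hc, hf, h1]
    have hgrefl : refl' g = g := by
      apply hinj
      have hc := AlgHom.congr_fun refl_conj g
      simp only [AlgHom.comp_apply] at hc
      rw [← hc, hf, h2]
    have hgA : g ∈ A' := key_mem hgrot hgrefl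
    have hmap : f ∈ Subalgebra.map EE A' := ⟨g, hgA, hf⟩
    rw [A', AlgHom.map_adjoin] at hmap
    refine Algebra.adjoin_le ?_ hmap
    intro x hx
    simp only [Set.image_insert_eq, Set.image_singleton, EE_X2, EE_g2, EE_g3,
      Set.mem_insert_iff, Set.mem_singleton_iff] at hx
    rcases hx with rfl | rfl | rfl
    · exact Algebra.subset_adjoin (by simp)
    · exact Algebra.subset_adjoin (by simp)
    · exact Subalgebra.mul_mem _ (by rw [← algebraMap_eq]; exact Subalgebra.algebraMap_mem _ _)
        (Algebra.subset_adjoin (by simp))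
  · intro hf
    have hrot : Algebra.adjoin ℂ
        ({X 2, X 0 ^ 2 + X 1 ^ 2, X 0 ^ 3 - 3 * X 0 * X 1 ^ 2} :
          Set (MvPolynomial (Fin 3) ℂ)) ≤ AlgHom.equalizer rotSub (AlgHom.id ℂ R3) := by
      apply Algebra.adjoin_le
      intro x hx
      rcases hx with rfl | rfl | rfl
      · exact rot_fix_X2
      · exact rot_fix_g2
      · exact rot_fix_g3
    have hrefl : Algebra.adjoin ℂ
        ({X 2, X 0 ^ 2 + X 1 ^ 2, X 0 ^ 3 - 3 * X 0 * X 1 ^ 2} :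
          Set (MvPolynomial (Fin 3) ℂ)) ≤ AlgHom.equalizer reflSub (AlgHom.id ℂ R3) := by
      apply Algebra.adjoin_le
      intro x hx
      rcases hx with rfl | rfl | rfl
      · exact refl_fix_X2
      · exact refl_fix_g2
      · exact refl_fix_g3
    exact ⟨hrot hf, hrefl hf⟩
end

section
/- Let n ≥ 8 be an even integer and let 0 ≤ i ≤ n−1. The number of 2-element subsets {j,k} of {0, …, n−1} \ {i} such that n divides i + j + k equals n/2 − 1 if i is odd or n divides 3i, and equals n/2 − 2 otherwise (i.e. if i is even, i ≠ 0, and n does not divide 3i). -/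
/-!
Given `j ≠ i`, the only candidate partner is `k ≡ -(i + j) (mod n)`, so the pairs `{j, k}` are
the orbits of the involution `j ↦ -(i + j)` on the indices `j` for which `i, j, k` are distinct,
and twice the count is `n` minus the number of degenerate `j`: those with `j = i`, with `k = i`
(`j ≡ -2i`) or with `k = j` (`2j ≡ -i`). For even `n` the last congruence has two solutions if
`i` is even and none if `i` is odd, and the three kinds of degenerate index collapse to
`2j ≡ -i` exactly when `n ∣ 3i`.
-/

open Finset

namespace Nat

/-- The residue of `-c` modulo `n`. -/
def negMod (n c : ℕ) : ℕ := (n - c % n) % n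

variable {n : ℕ}

lemma negMod_lt (hn : 0 < n) (c : ℕ) : negMod n c < n := Nat.mod_lt _ hn

lemma dvd_add_negMod (hn : 0 < n) (c : ℕ) : n ∣ c + negMod n c := by
  rw [Nat.dvd_iff_mod_eq_zero, negMod, Nat.add_mod_mod, ← Nat.add_sub_assoc (Nat.mod_lt _ hn).le,
    Nat.add_comm, Nat.add_sub_assoc (Nat.mod_le c n), ← Nat.mod_add_div c n]
  simp

lemma dvd_add_iff_modEq_negMod (hn : 0 < n) {c k : ℕ} :
    n ∣ c + k ↔ k ≡ negMod n c [MOD n] := by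
  rw [← Nat.modEq_zero_iff_dvd]
  have hc : c + negMod n c ≡ 0 [MOD n] := Nat.modEq_zero_iff_dvd.mpr (dvd_add_negMod hn c)
  exact ⟨fun h => Nat.ModEq.add_left_cancel' c (h.trans hc.symm),
    fun h => (Nat.ModEq.add_left c h).trans hc⟩

lemma dvd_add_iff_eq_negMod {c k : ℕ} (hk : k < n) : n ∣ c + k ↔ k = negMod n c := by
  have hn : 0 < n := by omega
  rw [dvd_add_iff_modEq_negMod hn]
  exact ⟨fun h => h.eq_of_lt_of_lt hk (negMod_lt hn c), fun h => h ▸ rfl⟩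

end Nat

open Nat

lemma Even.of_dvd_three_mul {n i : ℕ} (hn : Even n) (h : n ∣ 3 * i) : Even i :=
  even_iff_two_dvd.mpr (Nat.Coprime.dvd_of_dvd_mul_left (by norm_num) (hn.two_dvd.trans h))

section

variable (n i : ℕ)

def concurrentPairs : Finset (Finset ℕ) :=
  (((range n).erase i).powersetCard 2).filter fun s => n ∣ i + s.sum id

/-- The indices `j` for which `i`, `j`, `-(i + j)` are not pairwise distinct modulo `n`. -/
def degenerateIndices : Finset ℕ :=
  (range n).filter fun j => j = i ∨ n ∣ i + 2 * j ∨ n ∣ 2 * i + j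

def halvingIndices : Finset ℕ := (range n).filter fun j => n ∣ i + 2 * j

variable {n i}

lemma mem_concurrentPairs_iff (hi : i < n) {s : Finset ℕ} {j : ℕ} (hj : j ∈ s) :
    s ∈ concurrentPairs n i ↔
      j ∈ range n \ degenerateIndices n i ∧ s = {j, negMod n (i + j)} := by
  set k := negMod n (i + j)
  have hik : n ∣ i + j + k := dvd_add_negMod (by omega) _
  have hk_eq_j (hjn : j < n) : k = j ↔ n ∣ i + 2 * j := by
    rw [eq_comm, ← dvd_add_iff_eq_negMod hjn, add_assoc, ← two_mul]
  have hk_eq_i : k = i ↔ n ∣ 2 * i + j := by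
    rw [eq_comm, ← dvd_add_iff_eq_negMod hi, add_right_comm, ← two_mul]
  simp only [concurrentPairs, mem_filter, mem_powersetCard, mem_sdiff, degenerateIndices,
    mem_range, not_and, not_or]
  constructor
  · rintro ⟨⟨hsub, hcard⟩, hdvd⟩
    obtain ⟨l, rfl⟩ : ∃ l, s = {j, l} := by
      obtain ⟨l, hl⟩ := card_eq_one.mp (by rw [card_erase_of_mem hj, hcard] : #(s.erase j) = 1)
      exact ⟨l, by rw [← insert_erase hj, hl]⟩
    have hlj : l ≠ j := fun h => by simp [h] at hcard
    obtain ⟨hji, hjn⟩ := mem_erase.mp (hsub hj)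
    obtain ⟨hli, hln⟩ := mem_erase.mp (hsub (mem_insert_of_mem (mem_singleton_self l)))
    obtain rfl : l = k := by
      rw [sum_pair hlj.symm, id, id, ← add_assoc] at hdvd
      exact (dvd_add_iff_eq_negMod (mem_range.mp hln)).mp hdvd
    have hjn := mem_range.mp hjn
    exact ⟨⟨hjn, fun _ => ⟨hji, mt (hk_eq_j hjn).mpr hlj, mt hk_eq_i.mpr hli⟩⟩, rfl⟩
  · rintro ⟨⟨hjn, hdeg⟩, rfl⟩
    obtain ⟨hji, hj2, h2j⟩ := hdeg hjn
    have hkj : k ≠ j := mt (hk_eq_j hjn).mp hj2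
    have hkn : k < n := negMod_lt (by omega) _
    refine ⟨⟨insert_subset_iff.mpr ⟨?_, ?_⟩, card_pair hkj.symm⟩, ?_⟩
    · exact mem_erase.mpr ⟨hji, mem_range.mpr hjn⟩
    · exact singleton_subset_iff.mpr (mem_erase.mpr ⟨mt hk_eq_i.mp h2j, mem_range.mpr hkn⟩)
    · rwa [sum_pair hkj.symm, id, id, ← add_assoc]

lemma two_mul_card_concurrentPairs (hi : i < n) :
    2 * #(concurrentPairs n i) = #(range n \ degenerateIndices n i) := by
  have hunion : (concurrentPairs n i).biUnion id = range n \ degenerateIndices n i := by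
    ext j
    simp only [mem_biUnion, id]
    refine ⟨fun ⟨s, hs, hj⟩ => ((mem_concurrentPairs_iff hi hj).mp hs).1, fun hj => ?_⟩
    exact ⟨_, (mem_concurrentPairs_iff hi (mem_insert_self _ _)).mpr ⟨hj, rfl⟩,
      mem_insert_self _ _⟩
  rw [← hunion, card_biUnion, sum_const_nat, mul_comm]
  · intro s hs
    exact (mem_powersetCard.mp (mem_filter.mp hs).1).2
  · intro s hs t ht hst
    refine disjoint_left.mpr fun j hjs hjt => hst ?_
    rw [id] at hjs hjt
    rw [((mem_concurrentPairs_iff hi hjs).mp hs).2, ((mem_concurrentPairs_iff hi hjt).mp ht).2]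

lemma degenerateIndices_eq (hi : i < n) :
    degenerateIndices n i = insert i (insert (negMod n (2 * i)) (halvingIndices n i)) := by
  ext j
  simp only [degenerateIndices, halvingIndices, mem_filter, mem_insert, mem_range]
  constructor
  · rintro ⟨hjn, rfl | h | h⟩
    · exact Or.inl rfl
    · exact Or.inr (Or.inr ⟨hjn, h⟩)
    · exact Or.inr (Or.inl ((dvd_add_iff_eq_negMod hjn).mp h))
  · rintro (rfl | rfl | ⟨hjn, h⟩)
    · exact ⟨hi, Or.inl rfl⟩
    · exact ⟨negMod_lt (by omega) _, Or.inr (Or.inr (dvd_add_negMod (by omega) _))⟩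
    · exact ⟨hjn, Or.inr (Or.inl h)⟩

lemma card_degenerateIndices (hi : i < n) :
    #(degenerateIndices n i) =
      if n ∣ 3 * i then #(halvingIndices n i) else #(halvingIndices n i) + 2 := by
  rw [degenerateIndices_eq hi]
  set j := negMod n (2 * i)
  have hj : n ∣ 2 * i + j := dvd_add_negMod (by omega) _
  have hiH : i ∈ halvingIndices n i ↔ n ∣ 3 * i := by
    simp only [halvingIndices, mem_filter, mem_range, hi, true_and]
    ring_nf
  have hji : j = i ↔ n ∣ 3 * i := by
    rw [eq_comm, ← dvd_add_iff_eq_negMod hi]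
    ring_nf
  split_ifs with h3
  · rw [hji.mpr h3, insert_idem, insert_eq_of_mem (hiH.mpr h3)]
  · have hjH : j ∉ halvingIndices n i := fun hjH => h3 <| by
      have h2 : n ∣ i + 2 * j := (mem_filter.mp hjH).2
      have : 2 * (2 * i + j) = i + 2 * j + 3 * i := by ring
      exact (Nat.dvd_add_right h2).mp (this ▸ hj.mul_left 2)
    rw [card_insert_of_notMem, card_insert_of_notMem hjH]
    simp only [mem_insert, not_or]
    exact ⟨fun h => h3 (hji.mp h.symm), mt hiH.mp h3⟩

lemma card_halvingIndices (hn : 0 < n) (heven : Even n) :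
    #(halvingIndices n i) = if Even i then 2 else 0 := by
  split_ifs with hi
  · obtain ⟨m, rfl⟩ := heven
    obtain ⟨a, rfl⟩ := hi
    have hm : 0 < m := by omega
    have hH : halvingIndices (m + m) (a + a) =
        (range (m + m)).filter (· ≡ negMod m a [MOD m]) := by
      refine filter_congr fun j _ => ?_
      rw [← dvd_add_iff_modEq_negMod hm, ← two_mul, show a + a + 2 * j = 2 * (a + j) by ring,
        Nat.mul_dvd_mul_iff_left two_pos]
    rw [hH, ← Nat.count_eq_card_filter_range, Nat.count_modEq_card _ hm]
    simp [← two_mul, hm.ne']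
  · refine card_eq_zero.mpr (filter_eq_empty_iff.mpr fun j _ h => hi ?_)
    exact even_iff_two_dvd.mpr ((Nat.dvd_add_left (dvd_mul_right 2 j)).mp (heven.two_dvd.trans h))

end

theorem count_pairs_concurrent_general (n : ℕ) (heven : Even n)
    (i : ℕ) (hi : i < n) :
    ((((Finset.range n).erase i).powersetCard 2).filter
        (fun s => n ∣ i + s.sum id)).card =
      if Odd i ∨ n ∣ 3 * i then n / 2 - 1 else n / 2 - 2 := by
  have hn : 0 < n := by omega
  have hpairs := two_mul_card_concurrentPairs hi
  have hsub : degenerateIndices n i ⊆ range n := filter_subset _ _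
  rw [card_sdiff_of_subset hsub, card_range, card_degenerateIndices hi,
    card_halvingIndices hn heven] at hpairs
  change #(concurrentPairs n i) = _
  obtain ⟨m, hm⟩ := id heven
  rcases Nat.even_or_odd i with hev | hodd
  · rw [if_pos hev] at hpairs
    by_cases h3 : n ∣ 3 * i
    · rw [if_pos h3] at hpairs
      rw [if_pos (Or.inr h3)]
      omega
    · rw [if_neg h3] at hpairs
      rw [if_neg (not_or.mpr ⟨Nat.not_odd_iff_even.mpr hev, h3⟩)]
      omega
  · have h3 : ¬ n ∣ 3 * i := fun h => Nat.not_even_iff_odd.mpr hodd (heven.of_dvd_three_mul h)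
    rw [if_neg h3, if_neg (Nat.not_even_iff_odd.mpr hodd)] at hpairs
    rw [if_pos (Or.inl hodd)]
    omega

/-- For an even integer `n ≥ 8` and `0 ≤ i < n`, the number of 2-element
subsets `{j,k}` of `{0, …, n-1} \ {i}` with `n ∣ i + j + k` equals `n/2 - 1` if
`i` is odd or `n ∣ 3i`, and `n/2 - 2` otherwise. -/
theorem count_pairs_concurrent (n : ℕ) (hn : 8 ≤ n) (heven : Even n)
    (i : ℕ) (hi : i < n) :
    ((((Finset.range n).erase i).powersetCard 2).filter
        (fun s => n ∣ i + s.sum id)).card =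
      if Odd i ∨ n ∣ 3 * i then n / 2 - 1 else n / 2 - 2 :=
  count_pairs_concurrent_general n heven i hi
end
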